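/- arXiv:2601.13916 — 2 statements merged into one kernel-verified Lean document; each statement's English description precedes it below -/
import Mathlib

section
/- Let d ≥ 3 be an integer. Let X : ℝ^d → ℝ^d be a C^∞ vector field with div X = 0 pointwise on ℝ^d and with |X| ∈ L^d(ℝ^d), i.e. ∫_{ℝ^d} |X(x)|^d dx < ∞. Let f : ℝ^d → ℝ be a C^∞ function satisfying −Δf + X·∇f = 0 pointwise on ℝ^d, such that ∇f ∈ L²(ℝ^d, ℝ^d), f is bounded, and f(x) → 0 as |x| → +∞. Then f is identically 0. -/
open MeasureTheory Real Filter

noncomputable section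

/-- Partial derivative ∂ⱼf(x) on Euclidean d-space. -/
def pd (d : ℕ) (f : EuclideanSpace ℝ (Fin d) → ℝ) (j : Fin d)
    (x : EuclideanSpace ℝ (Fin d)) : ℝ :=
  fderiv ℝ f x (EuclideanSpace.single j 1)

/-- Divergence of a vector field on Euclidean d-space. -/
def divg (d : ℕ) (X : EuclideanSpace ℝ (Fin d) → EuclideanSpace ℝ (Fin d))
    (x : EuclideanSpace ℝ (Fin d)) : ℝ :=
  ∑ j, pd d (fun y => X y j) j x

/-- Laplacian of a scalar function on Euclidean d-space. -/
def lap (d : ℕ) (f : EuclideanSpace ℝ (Fin d) → ℝ) (x : EuclideanSpace ℝ (Fin d)) : ℝ :=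
  ∑ j, pd d (pd d f j) j x

/-- Integration by parts on Euclidean space, for two scalar functions one of which
makes all products compactly supported. -/
theorem ibp_aux {d : ℕ} (u w : EuclideanSpace ℝ (Fin d) → ℝ)
    (u' w' : EuclideanSpace ℝ (Fin d) → (EuclideanSpace ℝ (Fin d) →L[ℝ] ℝ))
    (v : EuclideanSpace ℝ (Fin d))
    (hu : ∀ x, HasFDerivAt u (u' x) x) (hw : ∀ x, HasFDerivAt w (w' x) x)
    (h1 : Integrable (fun x => u' x v * w x))
    (h2 : Integrable (fun x => u x * w' x v))
    (h3 : Integrable (fun x => u x * w x)) :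
    ∫ x, u x * w' x v = -∫ x, u' x v * w x := by
  exact integral_bilinear_hasFDerivAt_right_eq_neg_left_of_integrable
    (B := ContinuousLinearMap.mul ℝ ℝ) h1 h2 h3 (fun x _ => hu x) (fun x _ => hw x)

/-- Liouville theorem for −Δf + X·∇f = 0 with X a smooth divergence-free
vector field in L^d, f smooth bounded with ∇f ∈ L² and limit 0 at infinity. -/
theorem statement13 (d : ℕ) (hd : 3 ≤ d)
    (X : EuclideanSpace ℝ (Fin d) → EuclideanSpace ℝ (Fin d)) (hX : ContDiff ℝ (⊤ : ℕ∞) X)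
    (hdiv : ∀ x, divg d X x = 0) (hXL : Integrable (fun x => ‖X x‖ ^ d))
    (f : EuclideanSpace ℝ (Fin d) → ℝ) (hf : ContDiff ℝ (⊤ : ℕ∞) f)
    (heq : ∀ x, -lap d f x + ∑ j, X x j * pd d f j x = 0)
    (hgrad : Integrable (fun x => ∑ j, pd d f j x ^ 2))
    (hbd : ∃ C, ∀ x, |f x| ≤ C)
    (hlim : ∀ ε > (0:ℝ), ∃ R : ℝ, ∀ x, R ≤ ‖x‖ → |f x| < ε) :
    ∀ x, f x = 0 := by
  classical
  have hfd : Differentiable ℝ f := hf.differentiable (by simp)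
  have hfc : Continuous f := hf.continuous
  have hpdj : ∀ j, ContDiff ℝ (⊤ : ℕ∞) (pd d f j) := fun j =>
    (hf.fderiv_right (m := (⊤ : ℕ∞)) (by simp)).clm_apply contDiff_const
  have hXjc : ∀ j, ContDiff ℝ (⊤ : ℕ∞) (fun x => X x j) := by
    intro j
    have := (EuclideanSpace.proj (𝕜 := ℝ) j).contDiff.comp hX
    simpa [Function.comp_def] using this
  have hlap : ∀ x, lap d f x = ∑ j, X x j * pd d f j x := by
    intro x; have := heq x; linarith
  -- Main step: the gradient of f vanishes wherever |f| > t, for every t > 0.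
  have key : ∀ t : ℝ, 0 < t → ∀ x₀, t < |f x₀| → ∀ j, pd d f j x₀ = 0 := by
    intro t ht x₀ hx₀ j₀
    -- the smooth truncation profile
    set hfun : ℝ → ℝ := fun s =>
      Real.smoothTransition (s / t - 1) + Real.smoothTransition (-s / t - 1) with hfun_def
    have hst : ContDiff ℝ ((⊤:ℕ∞) : WithTop ℕ∞) Real.smoothTransition := Real.smoothTransition.contDiff
    have hfunC : ContDiff ℝ ((⊤:ℕ∞) : WithTop ℕ∞) hfun := by
      apply ContDiff.add
      · exact hst.comp ((contDiff_id.div_const _).sub contDiff_const)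
      · exact hst.comp ((contDiff_id.neg.div_const _).sub contDiff_const)
    have hfun_nonneg : ∀ s, 0 ≤ hfun s := fun s =>
      add_nonneg (Real.smoothTransition.nonneg _) (Real.smoothTransition.nonneg _)
    have hfun_zero : ∀ s : ℝ, |s| ≤ t → hfun s = 0 := by
      intro s hs
      rw [abs_le] at hs
      have h1 : s / t - 1 ≤ 0 := by
        rw [sub_nonpos, div_le_one ht]; exact hs.2
      have h2 : -s / t - 1 ≤ 0 := by
        rw [sub_nonpos, div_le_one ht]; linarith [hs.1]
      simp [hfun_def, Real.smoothTransition.zero_of_nonpos h1,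
        Real.smoothTransition.zero_of_nonpos h2]
    have hfun_pos : ∀ s : ℝ, t < |s| → 0 < hfun s := by
      intro s hs
      rcases abs_cases s with ⟨h, _⟩ | ⟨h, _⟩
      · apply add_pos_of_pos_of_nonneg _ (Real.smoothTransition.nonneg _)
        apply Real.smoothTransition.pos_of_pos
        rw [sub_pos, lt_div_iff₀ ht]; linarith
      · apply add_pos_of_nonneg_of_pos (Real.smoothTransition.nonneg _)
        apply Real.smoothTransition.pos_of_pos
        rw [sub_pos, lt_div_iff₀ ht]; linarith
    -- antiderivatives
    set H : ℝ → ℝ := fun s => ∫ u in (0:ℝ)..s, hfun u with H_def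
    have hH : ∀ s, HasDerivAt H (hfun s) s := by
      intro s
      exact intervalIntegral.integral_hasDerivAt_right
        (hfunC.continuous.intervalIntegrable _ _)
        (hfunC.continuous.stronglyMeasurable.stronglyMeasurableAtFilter)
        hfunC.continuous.continuousAt
    have hHcont : Continuous H := by
      rw [continuous_iff_continuousAt]; exact fun s => (hH s).continuousAt
    have habs : ∀ s : ℝ, |s| ≤ t → ∀ u ∈ Set.uIcc (0:ℝ) s, |u| ≤ t := by
      intro s hs u hu
      rw [abs_le] at hs ⊢
      rw [Set.mem_uIcc] at hu
      rcases hu with ⟨h1, h2⟩ | ⟨h1, h2⟩ <;> constructor <;> linarith [hs.1, hs.2]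
    have hH0 : ∀ s : ℝ, |s| ≤ t → H s = 0 := by
      intro s hs
      have : H s = ∫ u in (0:ℝ)..s, (0:ℝ) :=
        intervalIntegral.integral_congr (fun u hu => hfun_zero u (habs s hs u hu))
      simpa using this
    set Φ : ℝ → ℝ := fun s => ∫ u in (0:ℝ)..s, H u with Φ_def
    have hΦ : ∀ s, HasDerivAt Φ (H s) s := by
      intro s
      exact intervalIntegral.integral_hasDerivAt_right
        (hHcont.intervalIntegrable _ _)
        (hHcont.stronglyMeasurable.stronglyMeasurableAtFilter)
        hHcont.continuousAt
    have hΦ0 : ∀ s : ℝ, |s| ≤ t → Φ s = 0 := by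
      intro s hs
      have : Φ s = ∫ u in (0:ℝ)..s, (0:ℝ) :=
        intervalIntegral.integral_congr (fun u hu => hH0 u (habs s hs u hu))
      simpa using this
    -- the compact set carrying everything
    obtain ⟨R, hR⟩ := hlim t ht
    set A : Set (EuclideanSpace ℝ (Fin d)) := {x | t ≤ |f x|} with A_def
    have hAclosed : IsClosed A := isClosed_le continuous_const (continuous_abs.comp hfc)
    have hAsub : A ⊆ Metric.closedBall 0 |R| := by
      intro x hx
      simp only [A_def, Set.mem_setOf_eq] at hx
      by_contra hxR
      have hnorm : |R| ≤ ‖x‖ := by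
        simp only [Metric.mem_closedBall, dist_zero_right, not_le] at hxR
        exact hxR.le
      exact absurd (hR x (le_trans (le_abs_self R) hnorm)) (not_lt.2 hx)
    have hAcomp : IsCompact A :=
      (isCompact_closedBall 0 |R|).of_isClosed_subset hAclosed hAsub
    have hnotA : ∀ x ∉ A, |f x| ≤ t := by
      intro x hx
      simp only [A_def, Set.mem_setOf_eq, not_le] at hx
      exact hx.le
    -- integrability helper
    have hint : ∀ g : EuclideanSpace ℝ (Fin d) → ℝ, Continuous g → (∀ x ∉ A, g x = 0) →
        Integrable g := fun g hg h0 =>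
      hg.integrable_of_hasCompactSupport (HasCompactSupport.intro hAcomp h0)
    -- derivatives of compositions
    have hWd : ∀ x, HasFDerivAt (fun y => H (f y)) (hfun (f x) • fderiv ℝ f x) x := fun x =>
      (hH (f x)).comp_hasFDerivAt x (hfd x).hasFDerivAt
    have hPd : ∀ x, HasFDerivAt (fun y => Φ (f y)) (H (f x) • fderiv ℝ f x) x := fun x =>
      (hΦ (f x)).comp_hasFDerivAt x (hfd x).hasFDerivAt
    have hWcont : Continuous (fun y => H (f y)) := hHcont.comp hfc
    have hPcont : Continuous (fun y => Φ (f y)) :=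
      (continuous_iff_continuousAt.2 fun s => (hΦ s).continuousAt).comp hfc
    have hfuncont : Continuous (fun y => hfun (f y)) := hfunC.continuous.comp hfc
    have pdf : ∀ (g : EuclideanSpace ℝ (Fin d) → ℝ) j (x : EuclideanSpace ℝ (Fin d)),
        fderiv ℝ g x (EuclideanSpace.single j 1) = pd d g j x := fun _ _ _ => rfl
    -- first integration by parts, for each j
    have e1 : ∀ j, ∫ x, pd d f j x * (hfun (f x) * pd d f j x)
        = -∫ x, pd d (pd d f j) j x * H (f x) := by
      intro j
      have hu : ∀ x, HasFDerivAt (pd d f j) (fderiv ℝ (pd d f j) x) x := fun x =>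
        (((hpdj j).differentiable (by simp)) x).hasFDerivAt
      have hcont2 : Continuous (fun x => fderiv ℝ (pd d f j) x (EuclideanSpace.single j 1)) :=
        (((hpdj j).fderiv_right (m := (⊤ : ℕ∞)) (by simp)).clm_apply contDiff_const).continuous
      have h1 : Integrable (fun x =>
          fderiv ℝ (pd d f j) x (EuclideanSpace.single j 1) * H (f x)) := by
        apply hint _ (hcont2.mul hWcont)
        intro x hx; simp only [Pi.mul_apply]; rw [hH0 _ (hnotA x hx), mul_zero]
      have h2 : Integrable (fun x =>
          pd d f j x * ((hfun (f x) • fderiv ℝ f x) (EuclideanSpace.single j 1))) := by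
        simp only [ContinuousLinearMap.coe_smul', Pi.smul_apply, smul_eq_mul]
        apply hint _ ((hpdj j).continuous.mul (hfuncont.mul
          ((hpdj j).continuous)))
        intro x hx; simp only [Pi.mul_apply]; rw [hfun_zero _ (hnotA x hx)]; ring
      have h3 : Integrable (fun x => pd d f j x * H (f x)) := by
        apply hint _ ((hpdj j).continuous.mul hWcont)
        intro x hx; simp only [Pi.mul_apply]; rw [hH0 _ (hnotA x hx), mul_zero]
      have := ibp_aux (pd d f j) (fun y => H (f y)) (fun x => fderiv ℝ (pd d f j) x)
        (fun x => hfun (f x) • fderiv ℝ f x) (EuclideanSpace.single j 1) hu hWd h1 h2 h3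
      simpa only [ContinuousLinearMap.coe_smul', Pi.smul_apply, smul_eq_mul, pdf] using this
    -- second integration by parts, for each j
    have e2 : ∀ j, ∫ x, X x j * (H (f x) * pd d f j x)
        = -∫ x, pd d (fun y => X y j) j x * Φ (f x) := by
      intro j
      have hu : ∀ x, HasFDerivAt (fun y => X y j) (fderiv ℝ (fun y => X y j) x) x := fun x =>
        (((hXjc j).differentiable (by simp)) x).hasFDerivAt
      have hcont2 : Continuous (fun x =>
          fderiv ℝ (fun y => X y j) x (EuclideanSpace.single j 1)) :=
        (((hXjc j).fderiv_right (m := (⊤ : ℕ∞)) (by simp)).clm_apply contDiff_const).continuous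
      have h1 : Integrable (fun x =>
          fderiv ℝ (fun y => X y j) x (EuclideanSpace.single j 1) * Φ (f x)) := by
        apply hint _ (hcont2.mul hPcont)
        intro x hx; simp only [Pi.mul_apply]; rw [hΦ0 _ (hnotA x hx), mul_zero]
      have h2 : Integrable (fun x =>
          X x j * ((H (f x) • fderiv ℝ f x) (EuclideanSpace.single j 1))) := by
        simp only [ContinuousLinearMap.coe_smul', Pi.smul_apply, smul_eq_mul]
        apply hint _ ((hXjc j).continuous.mul (hWcont.mul
          ((hpdj j).continuous)))
        intro x hx; simp only [Pi.mul_apply]; rw [hH0 _ (hnotA x hx)]; ring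
      have h3 : Integrable (fun x => X x j * Φ (f x)) := by
        apply hint _ ((hXjc j).continuous.mul hPcont)
        intro x hx; simp only [Pi.mul_apply]; rw [hΦ0 _ (hnotA x hx), mul_zero]
      have := ibp_aux (fun y => X y j) (fun y => Φ (f y)) (fun x => fderiv ℝ (fun y => X y j) x)
        (fun x => H (f x) • fderiv ℝ f x) (EuclideanSpace.single j 1) hu hPd h1 h2 h3
      simpa only [ContinuousLinearMap.coe_smul', Pi.smul_apply, smul_eq_mul, pdf] using this
    -- integrability facts needed for summing
    have hint1 : ∀ j, Integrable (fun x => pd d f j x * (hfun (f x) * pd d f j x)) := by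
      intro j
      apply hint _ ((hpdj j).continuous.mul (hfuncont.mul (hpdj j).continuous))
      intro x hx; simp only [Pi.mul_apply]; rw [hfun_zero _ (hnotA x hx)]; ring
    have hint2 : ∀ j, Integrable (fun x => pd d (pd d f j) j x * H (f x)) := by
      intro j
      have hcont2 : Continuous (pd d (pd d f j) j) :=
        (((hpdj j).fderiv_right (m := (⊤ : ℕ∞)) (by simp)).clm_apply contDiff_const).continuous
      apply hint _ (hcont2.mul hWcont)
      intro x hx; simp only [Pi.mul_apply]; rw [hH0 _ (hnotA x hx), mul_zero]
    have hint3 : ∀ j, Integrable (fun x => pd d (fun y => X y j) j x * Φ (f x)) := by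
      intro j
      have hcont2 : Continuous (pd d (fun y => X y j) j) :=
        (((hXjc j).fderiv_right (m := (⊤ : ℕ∞)) (by simp)).clm_apply contDiff_const).continuous
      apply hint _ (hcont2.mul hPcont)
      intro x hx; simp only [Pi.mul_apply]; rw [hΦ0 _ (hnotA x hx), mul_zero]
    have hint4 : ∀ j, Integrable (fun x => X x j * (H (f x) * pd d f j x)) := by
      intro j
      apply hint _ ((hXjc j).continuous.mul (hWcont.mul (hpdj j).continuous))
      intro x hx; simp only [Pi.mul_apply]; rw [hH0 _ (hnotA x hx)]; ring
    -- the energy identity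
    have main : ∫ x, hfun (f x) * ∑ j, pd d f j x ^ 2 = 0 := by
      have step1 : ∫ x, hfun (f x) * ∑ j, pd d f j x ^ 2
          = ∑ j, ∫ x, pd d f j x * (hfun (f x) * pd d f j x) := by
        rw [← integral_finset_sum _ (fun j _ => hint1 j)]
        congr 1; funext x
        rw [Finset.mul_sum]
        congr 1; funext j; ring
      have step2 : ∑ j, ∫ x, pd d f j x * (hfun (f x) * pd d f j x)
          = -∫ x, lap d f x * H (f x) := by
        rw [Finset.sum_congr rfl (fun j _ => e1 j), Finset.sum_neg_distrib, neg_inj,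
          ← integral_finset_sum _ (fun j _ => hint2 j)]
        congr 1; funext x
        rw [lap, Finset.sum_mul]
      have step3 : ∫ x, lap d f x * H (f x)
          = ∑ j, ∫ x, X x j * (H (f x) * pd d f j x) := by
        rw [← integral_finset_sum _ (fun j _ => hint4 j)]
        congr 1; funext x
        rw [hlap x, Finset.sum_mul]
        congr 1; funext j; ring
      have step4 : ∑ j, ∫ x, X x j * (H (f x) * pd d f j x) = 0 := by
        rw [Finset.sum_congr rfl (fun j _ => e2 j), Finset.sum_neg_distrib,
          ← integral_finset_sum _ (fun j _ => hint3 j)]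
        have : ∀ x, (∑ j, pd d (fun y => X y j) j x * Φ (f x)) = 0 := by
          intro x
          rw [← Finset.sum_mul]
          rw [show (∑ j, pd d (fun y => X y j) j x) = divg d X x from rfl, hdiv x, zero_mul]
        simp only [this, integral_zero, neg_zero]
      rw [step1, step2, step3, step4, neg_zero]
    -- positivity: the integrand is identically zero
    have hGcont : Continuous (fun x => hfun (f x) * ∑ j, pd d f j x ^ 2) := by
      apply hfuncont.mul
      exact continuous_finset_sum _ (fun j _ => ((hpdj j).continuous).pow 2)
    have hGint : Integrable (fun x => hfun (f x) * ∑ j, pd d f j x ^ 2) := by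
      apply hint _ hGcont
      intro x hx; rw [hfun_zero _ (hnotA x hx), zero_mul]
    have hGnn : (0 : EuclideanSpace ℝ (Fin d) → ℝ) ≤ (fun x => hfun (f x) * ∑ j, pd d f j x ^ 2) :=
      fun x => mul_nonneg (hfun_nonneg _) (Finset.sum_nonneg fun j _ => sq_nonneg _)
    have hGzero : (fun x => hfun (f x) * ∑ j, pd d f j x ^ 2) = fun _ => (0:ℝ) := by
      have hae := (integral_eq_zero_iff_of_nonneg hGnn hGint).1 main
      exact (Continuous.ae_eq_iff_eq volume hGcont continuous_const).1 hae
    -- conclude at x₀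
    have hx0 : hfun (f x₀) * ∑ j, pd d f j x₀ ^ 2 = 0 := congrFun hGzero x₀
    have hpos := hfun_pos (f x₀) hx₀
    have hsum : ∑ j, pd d f j x₀ ^ 2 = 0 := by
      rcases mul_eq_zero.1 hx0 with h | h
      · exact absurd h hpos.ne'
      · exact h
    have := (Finset.sum_eq_zero_iff_of_nonneg (fun j _ => sq_nonneg (pd d f j x₀))).1 hsum
      j₀ (Finset.mem_univ _)
    exact (pow_eq_zero_iff two_ne_zero).1 this
  -- gradient vanishes on {f ≠ 0}
  have key2 : ∀ x, f x ≠ 0 → fderiv ℝ f x = 0 := by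
    intro x hx
    have ht : 0 < |f x| / 2 := by positivity
    have hx' : |f x| / 2 < |f x| := by
      have : 0 < |f x| := abs_pos.2 hx
      linarith
    have hj := key (|f x| / 2) ht x hx'
    have hlin : (fderiv ℝ f x).toLinearMap = (0 : EuclideanSpace ℝ (Fin d) →ₗ[ℝ] ℝ) := by
      apply Module.Basis.ext (EuclideanSpace.basisFun (Fin d) ℝ).toBasis
      intro i
      have : (EuclideanSpace.basisFun (Fin d) ℝ).toBasis i = EuclideanSpace.single i 1 := by
        simp [EuclideanSpace.basisFun_apply]
      rw [this]
      exact hj i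
    ext y
    exact LinearMap.congr_fun hlin y
  -- clopen argument
  by_contra hcon
  push_neg at hcon
  obtain ⟨x₀, hx₀⟩ := hcon
  set c := f x₀ with hc_def
  have hSclopen : IsClopen {x | f x = c} := by
    constructor
    · exact isClosed_eq hfc continuous_const
    · rw [Metric.isOpen_iff]
      intro x hx
      have hxU : x ∈ {y | f y ≠ 0} := by
        simp only [Set.mem_setOf_eq] at hx ⊢
        rw [hx]; exact hx₀
      have hU : IsOpen {y : EuclideanSpace ℝ (Fin d) | f y ≠ 0} := by
        have : {y : EuclideanSpace ℝ (Fin d) | f y ≠ 0} = f ⁻¹' ({0}ᶜ) := rfl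
        rw [this]
        exact (isOpen_compl_singleton).preimage hfc
      obtain ⟨r, hr0, hball⟩ := Metric.isOpen_iff.1 hU x hxU
      refine ⟨r, hr0, fun y hy => ?_⟩
      have hconst : f y = f x := by
        apply (convex_ball x r).is_const_of_fderivWithin_eq_zero
          (hfd.differentiableOn)
          (fun z hz => ?_) hy (Metric.mem_ball_self hr0)
        rw [fderivWithin_of_isOpen Metric.isOpen_ball hz]
        exact key2 z (hball hz)
      simp only [Set.mem_setOf_eq] at hx ⊢
      rw [hconst, hx]
  have huniv : {x | f x = c} = Set.univ :=
    hSclopen.eq_univ ⟨x₀, rfl⟩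
  have hall : ∀ y, f y = c := fun y => by
    have : y ∈ {x | f x = c} := huniv ▸ Set.mem_univ y
    exact this
  obtain ⟨R, hR⟩ := hlim |c| (abs_pos.2 hx₀)
  have hdpos : 0 < d := by omega
  set y := EuclideanSpace.single (⟨0, hdpos⟩ : Fin d) (max R 1) with hy_def
  have hynorm : R ≤ ‖y‖ := by
    rw [hy_def, EuclideanSpace.norm_single]
    rw [Real.norm_eq_abs, abs_of_pos (lt_of_lt_of_le one_pos (le_max_right R 1))]
    exact le_max_left R 1
  have := hR y hynorm
  rw [hall y] at this
  exact absurd this (lt_irrefl _)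
end
end

section
/- Let d ≥ 1 and let P : ℝ^d → ℝ be a polynomial function (the evaluation of a polynomial in d variables with real coefficients). Suppose that for every t > 0 the set {x ∈ ℝ^d : |P(x)| > t} has finite Lebesgue measure. Then P is the zero polynomial, i.e. P(x) = 0 for all x ∈ ℝ^d. -/
open MeasureTheory MvPolynomial Finset


lemma aux_pow (d : ℕ) (i : Fin d) (c : ℝ) (k : ℕ) :
    ((X i + C c) ^ k - X i ^ k : MvPolynomial (Fin d) ℝ) = 0 ∨
      ((X i + C c) ^ k - X i ^ k : MvPolynomial (Fin d) ℝ).totalDegree < k := by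
  induction k with
  | zero => left; simp
  | succ k ih =>
    right
    have hid : ((X i + C c) ^ (k+1) - X i ^ (k+1) : MvPolynomial (Fin d) ℝ)
        = (X i + C c) * ((X i + C c) ^ k - X i ^ k) + C c * X i ^ k := by ring
    rw [hid]
    refine lt_of_le_of_lt (totalDegree_add _ _) ?_
    rw [max_lt_iff]
    constructor
    · rcases ih with h0 | hlt
      · rw [h0, mul_zero]; simp
      · refine lt_of_le_of_lt (totalDegree_mul _ _) ?_
        have h1 : (X i + C c : MvPolynomial (Fin d) ℝ).totalDegree ≤ 1 := by
          refine le_trans (totalDegree_add _ _) ?_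
          simp [totalDegree_X, totalDegree_C]
        omega
    · refine lt_of_le_of_lt (totalDegree_mul _ _) ?_
      have h2 : (X i ^ k : MvPolynomial (Fin d) ℝ).totalDegree ≤ k := by
        refine le_trans (totalDegree_pow _ _) ?_
        simp [totalDegree_X]
      simp only [totalDegree_C, zero_add]
      omega

lemma aux_prod (d : ℕ) (v : Fin d → ℝ) (g : Fin d → ℕ) (s : Finset (Fin d)) :
    ((∏ i ∈ s, (X i + C (v i)) ^ g i) - ∏ i ∈ s, X i ^ g i : MvPolynomial (Fin d) ℝ) = 0 ∨
      ((∏ i ∈ s, (X i + C (v i)) ^ g i) - ∏ i ∈ s, X i ^ g i :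
        MvPolynomial (Fin d) ℝ).totalDegree < ∑ i ∈ s, g i := by
  classical
  induction s using Finset.induction with
  | empty => left; simp
  | @insert i s his ih =>
    set A : MvPolynomial (Fin d) ℝ := ∏ j ∈ s, (X j + C (v j)) ^ g j with hA
    set A' : MvPolynomial (Fin d) ℝ := ∏ j ∈ s, X j ^ g j with hA'
    have hdegA' : A'.totalDegree ≤ ∑ j ∈ s, g j := by
      refine le_trans (totalDegree_finset_prod _ _) ?_
      refine Finset.sum_le_sum fun j _ => ?_
      refine le_trans (totalDegree_pow _ _) ?_
      simp [totalDegree_X]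
    have hdegF : ((X i + C (v i)) ^ g i : MvPolynomial (Fin d) ℝ).totalDegree ≤ g i := by
      refine le_trans (totalDegree_pow _ _) ?_
      have h1 : (X i + C (v i) : MvPolynomial (Fin d) ℝ).totalDegree ≤ 1 := by
        refine le_trans (totalDegree_add _ _) ?_
        simp [totalDegree_X, totalDegree_C]
      calc g i * (X i + C (v i) : MvPolynomial (Fin d) ℝ).totalDegree ≤ g i * 1 :=
            Nat.mul_le_mul_left _ h1
        _ = g i := Nat.mul_one _
    rw [Finset.prod_insert his, Finset.prod_insert his, Finset.sum_insert his]
    have hid : ((X i + C (v i)) ^ g i * A - X i ^ g i * A' : MvPolynomial (Fin d) ℝ)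
        = (X i + C (v i)) ^ g i * (A - A') + ((X i + C (v i)) ^ g i - X i ^ g i) * A' := by
      ring
    rw [hid]
    rcases ih with h0 | hlt
    · rw [h0, mul_zero, zero_add]
      rcases aux_pow d i (v i) (g i) with hp0 | hplt
      · left; rw [hp0, zero_mul]
      · right
        refine lt_of_le_of_lt (totalDegree_mul _ _) ?_
        omega
    · right
      refine lt_of_le_of_lt (totalDegree_add _ _) ?_
      rw [max_lt_iff]
      constructor
      · refine lt_of_le_of_lt (totalDegree_mul _ _) ?_
        omega
      · rcases aux_pow d i (v i) (g i) with hp0 | hplt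
        · rw [hp0, zero_mul]; simp only [totalDegree_zero]; omega
        · refine lt_of_le_of_lt (totalDegree_mul _ _) ?_
          omega

lemma aux_translate_deg (d : ℕ) (v : Fin d → ℝ) (P : MvPolynomial (Fin d) ℝ) (n : ℕ)
    (hn : 1 ≤ n) (hP : P.totalDegree ≤ n) :
    (bind₁ (fun i => X i + C (v i)) P - P).totalDegree < n := by
  classical
  conv_lhs => rw [← support_sum_monomial_coeff P]
  rw [map_sum, ← Finset.sum_sub_distrib]
  refine lt_of_le_of_lt (totalDegree_finset_sum _ _) ?_
  rw [Finset.sup_lt_iff (show (⊥ : ℕ) < n from hn)]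
  intro m hm
  have hmdeg : (m.sum fun _ e => e) ≤ n := le_trans (le_totalDegree hm) hP
  rw [bind₁_monomial, monomial_eq]
  have hmsum : (m.prod fun i e => (X i : MvPolynomial (Fin d) ℝ) ^ e)
      = ∏ i ∈ m.support, X i ^ m i := rfl
  have hid : (C (coeff m P) * ∏ i ∈ m.support, (X i + C (v i)) ^ m i
        - C (coeff m P) * (m.prod fun i e => (X i : MvPolynomial (Fin d) ℝ) ^ e))
      = C (coeff m P) * ((∏ i ∈ m.support, (X i + C (v i)) ^ m i)
        - ∏ i ∈ m.support, X i ^ m i) := by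
    rw [hmsum]; ring
  rw [hid]
  have hss : (∑ i ∈ m.support, m i) = m.sum fun _ e => e := rfl
  rcases aux_prod d v m m.support with h0 | hlt
  · rw [h0, mul_zero, totalDegree_zero]; omega
  · refine lt_of_le_of_lt (totalDegree_mul _ _) ?_
    rw [totalDegree_C, zero_add]
    omega


lemma vol_univ_top (d : ℕ) (hd : 1 ≤ d) :
    volume (Set.univ : Set (EuclideanSpace ℝ (Fin d))) = ⊤ := by
  haveI : Nonempty (Fin d) := ⟨⟨0, hd⟩⟩
  haveI : Nontrivial (EuclideanSpace ℝ (Fin d)) := by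
    refine ⟨0, EuclideanSpace.single ⟨0, hd⟩ 1, fun hc => ?_⟩
    have := congrArg (fun f : EuclideanSpace ℝ (Fin d) => f ⟨0, hd⟩) hc
    simp [EuclideanSpace.single_apply] at this
  exact measure_univ_of_isAddLeftInvariant volume

lemma eval_translate (d : ℕ) (x v : Fin d → ℝ) (P : MvPolynomial (Fin d) ℝ) :
    eval x (bind₁ (fun i => X i + C (v i)) P) = eval (fun i => x i + v i) P := by
  have h := eval₂Hom_bind₁ (RingHom.id ℝ) x (fun i => X i + C (v i)) P
  simp only [eval₂Hom_X', RingHom.id_apply, map_add, eval₂Hom_C] at h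
  exact h

lemma const_eval_zero (d : ℕ) (hd : 1 ≤ d) (P : MvPolynomial (Fin d) ℝ)
    (h : ∀ t > (0:ℝ),
      volume {x : EuclideanSpace ℝ (Fin d) | t < |MvPolynomial.eval (fun i => x i) P|} < ⊤)
    (hconst : ∀ x : EuclideanSpace ℝ (Fin d),
      MvPolynomial.eval (fun i => x i) P = MvPolynomial.eval (fun _ => 0) P) :
    ∀ x : EuclideanSpace ℝ (Fin d), MvPolynomial.eval (fun i => x i) P = 0 := by
  set c : ℝ := MvPolynomial.eval (fun _ => 0) P with hc
  by_cases hc0 : c = 0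
  · intro x; rw [hconst x, hc0]
  · exfalso
    have hpos : (0:ℝ) < |c| / 2 := by positivity
    have hfin := h (|c|/2) hpos
    have hset : {x : EuclideanSpace ℝ (Fin d) | |c|/2 < |MvPolynomial.eval (fun i => x i) P|}
        = Set.univ := by
      ext x
      simp only [Set.mem_setOf_eq, Set.mem_univ, iff_true, hconst x, ← hc]
      have : (0:ℝ) < |c| := abs_pos.mpr hc0
      linarith
    rw [hset, vol_univ_top d hd] at hfin
    exact (lt_irrefl _ hfin)

/-- a polynomial function on ℝ^d all of whose superlevel sets
{|P| > t}, t > 0, have finite Lebesgue measure is identically zero. -/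
theorem statement15 (d : ℕ) (hd : 1 ≤ d) (P : MvPolynomial (Fin d) ℝ)
    (h : ∀ t > (0:ℝ),
      volume {x : EuclideanSpace ℝ (Fin d) | t < |MvPolynomial.eval (fun i => x i) P|} < ⊤) :
    ∀ x : EuclideanSpace ℝ (Fin d), MvPolynomial.eval (fun i => x i) P = 0 := by
  suffices H : ∀ n (Q : MvPolynomial (Fin d) ℝ), Q.totalDegree ≤ n →
      (∀ t > (0:ℝ),
        volume {x : EuclideanSpace ℝ (Fin d) | t < |MvPolynomial.eval (fun i => x i) Q|} < ⊤) →
      ∀ x : EuclideanSpace ℝ (Fin d), MvPolynomial.eval (fun i => x i) Q = 0 by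
    exact H P.totalDegree P le_rfl h
  intro n
  induction n with
  | zero =>
    intro Q hdeg hfin
    refine const_eval_zero d hd Q hfin ?_
    -- Q is a constant polynomial
    have h0 : Q.totalDegree = 0 := Nat.le_zero.mp hdeg
    have hQ : Q = C (coeff 0 Q) := by
      ext m
      rw [coeff_C]
      by_cases hm : 0 = m
      · simp [← hm]
      · simp only [hm, if_false]
        by_contra hne
        have hmem : m ∈ Q.support := by simpa [mem_support_iff] using hne
        have hz := (totalDegree_eq_zero_iff (Fin d) Q).mp h0 m hmem
        exact hm (by ext i; exact (hz i).symm)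
    intro x
    rw [hQ]; simp
  | succ n ih =>
    intro Q hdeg hfin
    have key : ∀ v : Fin d → ℝ, ∀ y : EuclideanSpace ℝ (Fin d),
        MvPolynomial.eval (fun i => y i + v i) Q = MvPolynomial.eval (fun i => y i) Q := by
      intro v
      set Q' : MvPolynomial (Fin d) ℝ := bind₁ (fun i => X i + C (v i)) Q - Q with hQ'
      have hQ'deg : Q'.totalDegree ≤ n :=
        Nat.lt_succ_iff.mp (aux_translate_deg d v Q (n+1) (Nat.succ_le_succ (Nat.zero_le n)) hdeg)
      have hQ'fin : ∀ t > (0:ℝ),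
          volume {x : EuclideanSpace ℝ (Fin d) | t < |MvPolynomial.eval (fun i => x i) Q'|} < ⊤ := by
        intro t ht
        set vE : EuclideanSpace ℝ (Fin d) := (WithLp.equiv 2 (Fin d → ℝ)).symm v with hvE
        set S : Set (EuclideanSpace ℝ (Fin d)) :=
          {x | t/2 < |MvPolynomial.eval (fun i => x i) Q|} with hS
        have hsub : {x : EuclideanSpace ℝ (Fin d) | t < |MvPolynomial.eval (fun i => x i) Q'|}
            ⊆ ((fun x => x + vE) ⁻¹' S) ∪ S := by
          intro y hy
          simp only [Set.mem_setOf_eq, hQ', map_sub] at hy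
          rw [eval_translate] at hy
          by_contra hcon
          simp only [Set.mem_union, Set.mem_preimage, hS, Set.mem_setOf_eq, not_or, not_lt] at hcon
          obtain ⟨h1, h2⟩ := hcon
          have h1' : |MvPolynomial.eval (fun i => y i + v i) Q| ≤ t/2 := by
            have : ∀ i, (y + vE) i = y i + v i := fun i => by
              rw [PiLp.add_apply]; rfl
            simpa [this] using h1
          have := abs_sub_abs_le_abs_sub (MvPolynomial.eval (fun i => y i + v i) Q)
            (MvPolynomial.eval (fun i => y i) Q)
          have habs := abs_sub (MvPolynomial.eval (fun i => y i + v i) Q)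
            (MvPolynomial.eval (fun i => y i) Q)
          linarith [abs_sub_abs_le_abs_sub (0:ℝ) (0:ℝ),
            (abs_sub (MvPolynomial.eval (fun i => y i + v i) Q)
              (MvPolynomial.eval (fun i => y i) Q))]
        have hfin2 := hfin (t/2) (by positivity)
        calc volume {x : EuclideanSpace ℝ (Fin d) | t < |MvPolynomial.eval (fun i => x i) Q'|}
            ≤ volume (((fun x => x + vE) ⁻¹' S) ∪ S) := measure_mono hsub
          _ ≤ volume ((fun x => x + vE) ⁻¹' S) + volume S := measure_union_le _ _
          _ = volume S + volume S := by rw [measure_preimage_add_right]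
          _ < ⊤ := by
              rw [hS]
              exact ENNReal.add_lt_top.mpr ⟨hfin2, hfin2⟩
      intro y
      have h0 := ih Q' hQ'deg hQ'fin y
      rw [hQ', map_sub, eval_translate] at h0
      linarith [h0]
    refine const_eval_zero d hd Q hfin ?_
    intro x
    have := key (fun i => x i) 0
    simpa using this
end
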